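/- Let Γ be a boundedly n-acyclic group, n ≥ 1. Then for every 1 ≤ i ≤ n, im(δ^{i−1}) is an injective Banach space and a complemented closed subspace of ℓ∞(Γ^i). -/

import Mathlib

/-!
`ℓ∞(S)` is injective, coordinatewise by Hahn–Banach, and a retract of an injective Banach space
is injective. If `ker δⁱ` is complemented in `ℓ∞(Γⁱ)`, then `δⁱ` restricted to a closed complement
is, by the open mapping theorem, an isomorphism onto the closed subspace `im δⁱ = ker δⁱ⁺¹`, so
`im δⁱ` is a retract of `ℓ∞(Γⁱ)`, hence injective; and an injective closed subspace is
complemented (extend the identity). Thus `ker δⁱ⁺¹` is complemented again, and the induction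
starts at `ker δ⁰ = ℓ∞(Γ⁰)`, as `δ⁰ = 0`.
-/

set_option synthInstance.maxHeartbeats 1000000
set_option maxHeartbeats 1000000

open scoped ENNReal

universe u v

/-- `ℓ∞(S, V)`: the Banach space of bounded functions `S → V` with the sup norm. -/
noncomputable abbrev ellInfty (S : Type*) (V : Type*) [NormedAddCommGroup V] : Type _ :=
  lp (fun _ : S => V) ∞

/-- A Banach space `X` is *injective* if for every Banach space `W`, every closed subspace
`V ⊆ W` and every bounded linear map `f : V → X`, there is a bounded linear extension of `f`
to all of `W`. -/
def IsInjectiveBanach (X : Type u) [NormedAddCommGroup X] [NormedSpace ℝ X] : Prop :=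
  ∀ (W : Type v) (_ : NormedAddCommGroup W) (_ : NormedSpace ℝ W) (_ : CompleteSpace W)
    (V : Submodule ℝ W), IsClosed (V : Set W) →
      ∀ f : V →L[ℝ] X, ∃ g : W →L[ℝ] X, ∀ v : V, g v = f v
/-- The inhomogeneous coboundary operator of the bounded cochain complex of a group `Γ`
with trivial coefficients in `V` (raw formula on arbitrary functions):
`δⁿ(f)(γ₁,…,γ_{n+1}) = f(γ₂,…,γ_{n+1}) + Σ_{i=1}^n (−1)^i f(γ₁,…,γᵢγ_{i+1},…,γ_{n+1})
  + (−1)^{n+1} f(γ₁,…,γₙ)` (here written with `0`-indexed tuples). -/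
noncomputable def deltaFun (Γ : Type*) [Group Γ] {V : Type*} [AddCommGroup V] [Module ℝ V]
    (n : ℕ) (f : (Fin n → Γ) → V) : (Fin n.succ → Γ) → V :=
  fun γ =>
    f (fun j => γ j.succ)
      + ∑ i : Fin n, ((-1 : ℝ) ^ (i.1 + 1)) •
          f (fun j => if j.1 < i.1 then γ j.castSucc
              else if j.1 = i.1 then γ j.castSucc * γ j.succ else γ j.succ)
      + ((-1 : ℝ) ^ (n + 1)) • f (fun j => γ j.castSucc)

theorem deltaFun_norm_le (Γ : Type*) [Group Γ] {V : Type*} [NormedAddCommGroup V]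
    [NormedSpace ℝ V] (n : ℕ) (f : ellInfty (Fin n → Γ) V) (γ : Fin (n + 1) → Γ) :
    ‖deltaFun Γ n (f : (Fin n → Γ) → V) γ‖ ≤ (n + 2) * ‖f‖ := by
  have hb : ∀ g : Fin n → Γ, ‖(f : (Fin n → Γ) → V) g‖ ≤ ‖f‖ := fun g =>
    lp.norm_apply_le_norm (by norm_num) f g
  have hf0 : (0 : ℝ) ≤ ‖f‖ := norm_nonneg f
  simp only [deltaFun]
  refine (norm_add₃_le).trans ?_
  have h2 : ‖∑ i : Fin n, ((-1 : ℝ) ^ (i.1 + 1)) •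
      (f : (Fin n → Γ) → V) (fun j => if j.1 < i.1 then γ j.castSucc
        else if j.1 = i.1 then γ j.castSucc * γ j.succ else γ j.succ)‖ ≤ n * ‖f‖ := by
    refine (norm_sum_le _ _).trans ?_
    have key : ∀ i : Fin n, ‖((-1 : ℝ) ^ (i.1 + 1)) •
        (f : (Fin n → Γ) → V) (fun j => if j.1 < i.1 then γ j.castSucc
          else if j.1 = i.1 then γ j.castSucc * γ j.succ else γ j.succ)‖ ≤ ‖f‖ := by
      intro i
      rw [norm_smul]
      have : |(-1 : ℝ) ^ (i.1 + 1)| = 1 := by simp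
      rw [Real.norm_eq_abs, this, one_mul]
      exact hb _
    calc ∑ i : Fin n, _ ≤ ∑ _i : Fin n, ‖f‖ := Finset.sum_le_sum (fun i _ => key i)
      _ = n * ‖f‖ := by simp [Finset.sum_const, Finset.card_univ]
  have h3 : ‖((-1 : ℝ) ^ (n + 1)) •
      (f : (Fin n → Γ) → V) (fun j => γ j.castSucc)‖ ≤ ‖f‖ := by
    rw [norm_smul]; simpa using hb _
  nlinarith [hb (fun j => γ j.succ)]

theorem deltaFun_memℓp (Γ : Type*) [Group Γ] {V : Type*} [NormedAddCommGroup V]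
    [NormedSpace ℝ V] (n : ℕ) (f : ellInfty (Fin n → Γ) V) :
    Memℓp (deltaFun Γ n (f : (Fin n → Γ) → V)) ∞ := by
  apply memℓp_infty
  exact ⟨(n + 2) * ‖f‖, by rintro x ⟨γ, rfl⟩; exact deltaFun_norm_le Γ n f γ⟩

/-- The coboundary as a linear map `ℓ∞(Γⁿ, V) → ℓ∞(Γ^{n+1}, V)`. -/
noncomputable def deltaLin (Γ : Type*) [Group Γ] (V : Type*) [NormedAddCommGroup V]
    [NormedSpace ℝ V] (n : ℕ) :
    ellInfty (Fin n → Γ) V →ₗ[ℝ] ellInfty (Fin (n + 1) → Γ) V where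
  toFun f := ⟨deltaFun Γ n (f : (Fin n → Γ) → V), deltaFun_memℓp Γ n f⟩
  map_add' f g := by
    apply lp.ext
    funext γ
    show deltaFun Γ n (⇑f + ⇑g) γ = deltaFun Γ n ⇑f γ + deltaFun Γ n ⇑g γ
    simp only [deltaFun, Pi.add_apply, smul_add, Finset.sum_add_distrib]
    abel
  map_smul' c f := by
    apply lp.ext
    funext γ
    simp [deltaFun, smul_comm c, Finset.smul_sum, smul_add]

/-- The coboundary as a bounded linear operator `δⁿ : ℓ∞(Γⁿ, V) → ℓ∞(Γ^{n+1}, V)`.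
(For `n = 0` this is the map out of `ℓ∞(Γ⁰, V) ≅ V`, which is the zero map `δ⁰`.) -/
noncomputable def deltaL (Γ : Type*) [Group Γ] (V : Type*) [NormedAddCommGroup V]
    [NormedSpace ℝ V] (n : ℕ) :
    ellInfty (Fin n → Γ) V →L[ℝ] ellInfty (Fin (n + 1) → Γ) V :=
  LinearMap.mkContinuous (deltaLin Γ V n) (n + 2) (by
    intro f
    exact lp.norm_le_of_forall_le (by positivity) (fun γ => deltaFun_norm_le Γ n f γ))

/-- `Γ` is boundedly `n`-acyclic: the bounded cochain complex
`0 → ℝ → ℓ∞(Γ) → ℓ∞(Γ²) → ⋯` with trivial real coefficients is exact in degrees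
`1 ≤ i ≤ n`, i.e. `im (δ^{i}) = ker (δ^{i+1})` for all `i` with `i + 1 ≤ n`. -/
def BoundedlyAcyclic (Γ : Type*) [Group Γ] (n : ℕ) : Prop :=
  ∀ i : ℕ, i + 1 ≤ n →
    LinearMap.range (deltaL Γ ℝ i).toLinearMap = LinearMap.ker (deltaL Γ ℝ (i + 1)).toLinearMap

namespace ContinuousLinearMap

variable {𝕜 : Type*} [NontriviallyNormedField 𝕜]
  {E : Type*} [NormedAddCommGroup E] [NormedSpace 𝕜 E] [CompleteSpace E]
  {F : Type*} [NormedAddCommGroup F] [NormedSpace 𝕜 F] [CompleteSpace F]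

theorem hasRightInverse_of_surjective_of_closedComplemented_ker (f : E →L[𝕜] F)
    (hf : Function.Surjective f) (hker : f.ker.ClosedComplemented) : f.HasRightInverse := by
  obtain ⟨q, hq, hcompl⟩ := hker.exists_isClosed_isCompl
  have : CompleteSpace q := hq.completeSpace_coe
  let g : q →L[𝕜] F := f.comp q.subtypeL
  have hg_ker : g.ker = ⊥ := by
    rw [LinearMap.ker_eq_bot']
    intro x hx
    exact Subtype.ext (Submodule.disjoint_def.mp hcompl.disjoint x hx x.2)
  have hg_range : g.range = ⊤ := by
    rw [LinearMap.range_eq_top]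
    intro y
    obtain ⟨x, rfl⟩ := hf y
    obtain ⟨a, ha, b, hb, rfl⟩ :=
      Submodule.mem_sup.mp (hcompl.sup_eq_top ▸ Submodule.mem_top : x ∈ f.ker ⊔ q)
    have hfa : f a = 0 := ha
    exact ⟨⟨b, hb⟩, by simp [g, hfa]⟩
  let e := ContinuousLinearEquiv.ofBijective g hg_ker hg_range
  exact ⟨q.subtypeL.comp (e.symm : F →L[𝕜] q), e.apply_symm_apply⟩

end ContinuousLinearMap

section EllInfty

variable {𝕜 : Type*} [NontriviallyNormedField 𝕜] {S W V : Type*} [SeminormedAddCommGroup W]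
  [NormedSpace 𝕜 W] [NormedAddCommGroup V] [NormedSpace 𝕜 V]

noncomputable def ContinuousLinearMap.ellInftyPi (g : S → W →L[𝕜] V) {C : ℝ} (hC : 0 ≤ C)
    (hg : ∀ s, ‖g s‖ ≤ C) : W →L[𝕜] ellInfty S V :=
  LinearMap.mkContinuous
    { toFun x := ⟨fun s => g s x,
        memℓp_infty ⟨C * ‖x‖, by rintro _ ⟨s, rfl⟩; exact (g s).le_of_opNorm_le (hg s) x⟩⟩
      map_add' x y := lp.ext <| funext fun s => map_add (g s) x y
      map_smul' c x := lp.ext <| funext fun s => map_smul (g s) c x }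
    C fun x => lp.norm_le_of_forall_le (by positivity) fun s => (g s).le_of_opNorm_le (hg s) x

@[simp]
theorem ContinuousLinearMap.ellInftyPi_apply (g : S → W →L[𝕜] V) {C : ℝ} (hC : 0 ≤ C)
    (hg : ∀ s, ‖g s‖ ≤ C) (x : W) (s : S) : ellInftyPi g hC hg x s = g s x :=
  rfl

end EllInfty

theorem ellInfty_isInjectiveBanach (S : Type*) : IsInjectiveBanach.{_, v} (ellInfty S ℝ) := by
  intro W _ _ _ V _ f
  have hext (s : S) : ∃ g : W →L[ℝ] ℝ, (∀ v : V, g v = f v s) ∧ ‖g‖ ≤ ‖f‖ := by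
    obtain ⟨g, hg, hg_norm⟩ := exists_extension_norm_eq V ((lp.evalCLM ℝ _ ∞ s).comp f)
    refine ⟨g, fun v => hg v, hg_norm ▸ ?_⟩
    calc ‖(lp.evalCLM ℝ _ ∞ s).comp f‖ ≤ ‖lp.evalCLM ℝ (fun _ : S => ℝ) ∞ s‖ * ‖f‖ :=
          ContinuousLinearMap.opNorm_comp_le _ _
      _ ≤ 1 * ‖f‖ := by gcongr; exact LinearMap.mkContinuous_norm_le _ zero_le_one _
      _ = ‖f‖ := one_mul _
  choose g hg_ext hg_norm using hext
  exact ⟨ContinuousLinearMap.ellInftyPi g (norm_nonneg f) hg_norm, fun v => by ext s; simp [hg_ext]⟩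

namespace IsInjectiveBanach

theorem of_hasRightInverse {X Y : Type*} [NormedAddCommGroup X] [NormedSpace ℝ X]
    [NormedAddCommGroup Y] [NormedSpace ℝ Y] (hX : IsInjectiveBanach.{_, v} X) {r : X →L[ℝ] Y}
    (hr : r.HasRightInverse) : IsInjectiveBanach.{_, v} Y := by
  obtain ⟨s, hs⟩ := hr
  intro W _ _ hW V hV f
  obtain ⟨g, hg⟩ := hX W _ _ hW V hV (s.comp f)
  exact ⟨r.comp g, fun v => by simp [hg v, hs (f v)]⟩

theorem closedComplemented {W : Type v} [NormedAddCommGroup W] [NormedSpace ℝ W]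
    [CompleteSpace W] {K : Submodule ℝ W} (hK : IsInjectiveBanach.{v, v} K)
    (hK_closed : IsClosed (K : Set W)) : K.ClosedComplemented :=
  hK W _ _ ‹_› K hK_closed (ContinuousLinearMap.id ℝ K)

theorem range_of_closedComplemented_ker {X Y : Type*} [NormedAddCommGroup X]
    [NormedSpace ℝ X] [CompleteSpace X] [NormedAddCommGroup Y] [NormedSpace ℝ Y] [CompleteSpace Y]
    (hX : IsInjectiveBanach.{_, v} X) {T : X →L[ℝ] Y} (hker : T.ker.ClosedComplemented)
    (hrange : IsClosed (T.range : Set Y)) : IsInjectiveBanach.{_, v} T.range := by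
  have : CompleteSpace T.range := hrange.completeSpace_coe
  refine hX.of_hasRightInverse
    (T.rangeRestrict.hasRightInverse_of_surjective_of_closedComplemented_ker ?_ ?_)
  · exact LinearMap.surjective_rangeRestrict _
  · rwa [ContinuousLinearMap.ker_codRestrict]

end IsInjectiveBanach

theorem deltaL_zero (Γ : Type*) [Group Γ] (V : Type*) [NormedAddCommGroup V]
    [NormedSpace ℝ V] : deltaL Γ V 0 = 0 := by
  ext f γ
  have hnil : (fun j : Fin 0 => γ j.succ) = fun j => γ j.castSucc := Subsingleton.elim _ _
  simp [deltaL, deltaLin, deltaFun, hnil]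

theorem isInjectiveBanach_range_deltaL {Γ : Type*} [Group Γ] {i : ℕ}
    (hker : (deltaL Γ ℝ i).ker.ClosedComplemented)
    (hrange : IsClosed ((deltaL Γ ℝ i).range : Set (ellInfty (Fin (i + 1) → Γ) ℝ))) :
    IsInjectiveBanach.{_, v} (deltaL Γ ℝ i).range :=
  (ellInfty_isInjectiveBanach _).range_of_closedComplemented_ker hker hrange

theorem range_delta_injective_and_complemented_general (Γ : Type*) [Group Γ] (n : ℕ)
    (h : BoundedlyAcyclic Γ n) :
    ∀ i : ℕ, i + 1 ≤ n →
      IsClosed ((LinearMap.range (deltaL Γ ℝ i).toLinearMap : Submodule ℝ _) :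
          Set (ellInfty (Fin (i + 1) → Γ) ℝ)) ∧
        IsInjectiveBanach (LinearMap.range (deltaL Γ ℝ i).toLinearMap) ∧
        (LinearMap.range (deltaL Γ ℝ i).toLinearMap).ClosedComplemented := by
  have hclosed (i : ℕ) (hi : i + 1 ≤ n) :
      IsClosed ((deltaL Γ ℝ i).range : Set (ellInfty (Fin (i + 1) → Γ) ℝ)) :=
    h i hi ▸ (deltaL Γ ℝ (i + 1)).isClosed_ker
  have hker (i : ℕ) (hi : i ≤ n) : (deltaL Γ ℝ i).ker.ClosedComplemented := by
    induction i with
    | zero => simp [deltaL_zero, Submodule.closedComplemented_top]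
    | succ i ih =>
      rw [← h i hi]
      exact (isInjectiveBanach_range_deltaL (ih (by omega)) (hclosed i hi)).closedComplemented
        (hclosed i hi)
  intro i hi
  exact ⟨hclosed i hi, isInjectiveBanach_range_deltaL (hker i (by omega)) (hclosed i hi),
    (isInjectiveBanach_range_deltaL (hker i (by omega)) (hclosed i hi)).closedComplemented
      (hclosed i hi)⟩

/-- Let `Γ` be a boundedly `n`-acyclic group, `n ≥ 1`. Then for every degree
`1 ≤ i+1 ≤ n`, the image of `δ^i` is an injective Banach space and a complemented closed
subspace of `ℓ∞(Γ^{i+1})`. -/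
theorem range_delta_injective_and_complemented (Γ : Type*) [Group Γ] (n : ℕ) (hn : 1 ≤ n)
    (h : BoundedlyAcyclic Γ n) :
    ∀ i : ℕ, i + 1 ≤ n →
      IsClosed ((LinearMap.range (deltaL Γ ℝ i).toLinearMap : Submodule ℝ _) :
          Set (ellInfty (Fin (i + 1) → Γ) ℝ)) ∧
        IsInjectiveBanach (LinearMap.range (deltaL Γ ℝ i).toLinearMap) ∧
        (LinearMap.range (deltaL Γ ℝ i).toLinearMap).ClosedComplemented :=
  range_delta_injective_and_complemented_general Γ n h
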